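/- arXiv:2212.06723 — 4 statements merged into one kernel-verified Lean document; each statement's English description precedes it below -/
import Mathlib

section
/- Let Z be a Köthe sequence space (a Banach sequence space with the ideal property: |x| ≤ |z| pointwise and z ∈ Z implies x ∈ Z with ‖x‖ ≤ ‖z‖). Then for every z ∈ Z, the distance from z to the closed ideal Z_o of order continuous elements satisfies dist_Z(z, Z_o) = lim_{n→∞} ‖z · χ_{{n, n+1, ...}}‖_Z, provided Z_o is nontrivial. -/
/-- A Köthe sequence space: a linear subspace of `ℕ → ℝ` with a norm having the
ideal property, and containing the standard unit vectors. -/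
structure KotheSeq where
  mem : (ℕ → ℝ) → Prop
  nrm : (ℕ → ℝ) → ℝ
  mem_zero : mem 0
  mem_add : ∀ {x y}, mem x → mem y → mem (x + y)
  mem_smul : ∀ (c : ℝ) {x}, mem x → mem (c • x)
  nrm_nonneg : ∀ x, 0 ≤ nrm x
  nrm_zero : nrm 0 = 0
  nrm_eq_zero : ∀ {x}, mem x → nrm x = 0 → x = 0
  nrm_add : ∀ {x y}, mem x → mem y → nrm (x + y) ≤ nrm x + nrm y
  nrm_smul : ∀ (c : ℝ) (x), nrm (c • x) = |c| * nrm x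
  ideal : ∀ {x z}, (∀ n, |x n| ≤ |z n|) → mem z → mem x
  ideal_nrm : ∀ {x z}, (∀ n, |x n| ≤ |z n|) → mem z → nrm x ≤ nrm z
  mem_single : ∀ k : ℕ, mem (fun m => if m = k then 1 else 0)

/-- The truncation of a sequence to the tail `{n, n+1, ...}`. -/
def tailTrunc (z : ℕ → ℝ) (n : ℕ) : ℕ → ℝ := fun m => if n ≤ m then z m else 0

/-- The ideal of order continuous elements of a Köthe sequence space:
`z ∈ Z_o` iff `‖z·χ_{{n,n+1,...}}‖_Z → 0`. -/
def KotheSeq.OC (Z : KotheSeq) (z : ℕ → ℝ) : Prop :=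
  Z.mem z ∧ Filter.Tendsto (fun n => Z.nrm (tailTrunc z n)) Filter.atTop (nhds 0)

/-- **Distance to the order continuous part (Claim ♣).**
For a Köthe sequence space `Z` whose order continuous part `Z_o` is nontrivial,
and any `z ∈ Z`, the distance from `z` to `Z_o` equals
`lim_{n→∞} ‖z·χ_{{n,n+1,...}}‖_Z`; in particular this limit exists. -/
theorem dist_to_order_continuous_part (Z : KotheSeq)
    (hZo : ∃ w, Z.OC w ∧ w ≠ 0)
    (z : ℕ → ℝ) (hz : Z.mem z) :
    Filter.Tendsto (fun n => Z.nrm (tailTrunc z n)) Filter.atTop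
      (nhds (sInf {c : ℝ | ∃ y, Z.OC y ∧ c = Z.nrm (z - y)})) := by
  classical
  set a : ℕ → ℝ := fun n => Z.nrm (tailTrunc z n) with ha
  have hdom : ∀ (w : ℕ → ℝ) (n : ℕ) (m : ℕ), |tailTrunc w n m| ≤ |w m| := by
    intro w n m; unfold tailTrunc; split <;> simp
  have hmemT : ∀ n, Z.mem (tailTrunc z n) := fun n => Z.ideal (hdom z n) hz
  have hanti : Antitone a := by
    intro n m hnm
    apply Z.ideal_nrm _ (hmemT n)
    intro k
    unfold tailTrunc
    by_cases h1 : m ≤ k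
    · rw [if_pos h1, if_pos (le_trans hnm h1)]
    · rw [if_neg h1]; simp
  have hbdd : BddBelow (Set.range a) := ⟨0, by rintro _ ⟨n, rfl⟩; exact Z.nrm_nonneg _⟩
  have htend : Filter.Tendsto a Filter.atTop (nhds (⨅ n, a n)) :=
    tendsto_atTop_ciInf hanti hbdd
  -- the head truncations
  set yy : ℕ → (ℕ → ℝ) := fun n m => if n ≤ m then 0 else z m with hyy
  have hzyy : ∀ n, z - yy n = tailTrunc z n := by
    intro n; funext m
    simp only [Pi.sub_apply, hyy, tailTrunc]
    split <;> simp
  have hOCyy : ∀ n, Z.OC (yy n) := by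
    intro n
    refine ⟨Z.ideal (fun m => by simp only [hyy]; split <;> simp) hz, ?_⟩
    have hev : ∀ᶠ k in Filter.atTop, Z.nrm (tailTrunc (yy n) k) = 0 := by
      filter_upwards [Filter.eventually_ge_atTop n] with k hk
      have : tailTrunc (yy n) k = 0 := by
        funext m
        simp only [tailTrunc, hyy, Pi.zero_apply]
        by_cases h1 : k ≤ m
        · rw [if_pos h1, if_pos (le_trans hk h1)]
        · rw [if_neg h1]
      rw [this, Z.nrm_zero]
    exact Filter.Tendsto.congr' (hev.mono fun k h => h.symm) tendsto_const_nhds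
  set S := {c : ℝ | ∃ y, Z.OC y ∧ c = Z.nrm (z - y)} with hS
  have hSne : S.Nonempty := ⟨a 0, yy 0, hOCyy 0, by rw [hzyy 0]⟩
  have hSbdd : BddBelow S := ⟨0, by rintro c ⟨y, _, rfl⟩; exact Z.nrm_nonneg _⟩
  have key : sInf S = ⨅ n, a n := by
    apply le_antisymm
    · exact le_ciInf fun n => csInf_le hSbdd ⟨yy n, hOCyy n, by rw [hzyy n]⟩
    · apply le_csInf hSne
      rintro c ⟨y, ⟨hym, hyt⟩, rfl⟩
      have hmemzy : Z.mem (z - y) := by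
        have := Z.mem_add hz (Z.mem_smul (-1) hym)
        simpa [sub_eq_add_neg, neg_one_smul] using this
      have hbound : ∀ n, a n ≤ Z.nrm (z - y) + Z.nrm (tailTrunc y n) := by
        intro n
        have hsplit : tailTrunc z n = tailTrunc (z - y) n + tailTrunc y n := by
          funext m
          simp only [tailTrunc, Pi.add_apply, Pi.sub_apply]
          split <;> simp
        have h1 : a n ≤ Z.nrm (tailTrunc (z - y) n) + Z.nrm (tailTrunc y n) := by
          simp only [ha]
          rw [hsplit]
          exact Z.nrm_add (Z.ideal (hdom _ n) hmemzy) (Z.ideal (hdom _ n) hym)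
        have h2 : Z.nrm (tailTrunc (z - y) n) ≤ Z.nrm (z - y) :=
          Z.ideal_nrm (hdom _ n) hmemzy
        linarith
      have hrhs : Filter.Tendsto (fun n => Z.nrm (z - y) + Z.nrm (tailTrunc y n))
          Filter.atTop (nhds (Z.nrm (z - y))) := by
        simpa using tendsto_const_nhds.add hyt
      exact le_of_tendsto_of_tendsto' htend hrhs hbound
  rw [key]
  exact htend
end

section
/- Let 1 < q < ∞. The functional ψ(f) := lim_{𝒰} [2^{n(1−1/q)} ∫₀^{2^{−n}} f(t) dt], where 𝒰 is a free ultrafilter on ℕ, defines a bounded linear functional on L_{q,∞}(0,1), with |ψ(f)| ≤ ‖f‖_{L_{q,∞}} · q/(q−1). -/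
open MeasureTheory
open scoped ENNReal

/-- The weak-`L_s` (Marcinkiewicz) quasinorm with respect to a measure `μ`,
defined via the distribution function: `‖f‖_{L_{s,∞}} = sup_{α>0} α · μ{|f|>α}^{1/s}`. -/
noncomputable def weakNorm (s : ℝ) (f : ℝ → ℝ) (μ : Measure ℝ) : ℝ≥0∞ :=
  ⨆ α : {a : ℝ // 0 < a}, ENNReal.ofReal α.1 * (μ {t | α.1 < |f t|}) ^ (1 / s)

namespace UFW
open Set

lemma dist_bound' {q : ℝ} {f : ℝ → ℝ} {μ : Measure ℝ} {α : ℝ} (hα : 0 < α) :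
    (μ {t | α < |f t|}) ^ (1 / q) ≤ weakNorm q f μ / ENNReal.ofReal α := by
  have h := le_iSup (fun a : {a : ℝ // 0 < a} =>
    ENNReal.ofReal a.1 * (μ {t | a.1 < |f t|}) ^ (1 / q)) ⟨α, hα⟩
  have hne : ENNReal.ofReal α ≠ 0 := by
    simp [ENNReal.ofReal_eq_zero, not_le, hα]
  exact (ENNReal.le_div_iff_mul_le (Or.inl hne) (Or.inl ENNReal.ofReal_ne_top)).2
    (by rw [mul_comm]; exact h)

lemma dist_bound {q : ℝ} (hq : 1 < q) {f : ℝ → ℝ} {μ : Measure ℝ} {α : ℝ} (hα : 0 < α) :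
    μ {t | α < |f t|} ≤ (weakNorm q f μ / ENNReal.ofReal α) ^ q := by
  have hq0 : q ≠ 0 := by positivity
  have h := ENNReal.rpow_le_rpow (dist_bound' (q := q) (f := f) (μ := μ) hα)
    (le_of_lt (by linarith : (0:ℝ) < q))
  rwa [← ENNReal.rpow_mul, one_div_mul_cancel hq0, ENNReal.rpow_one] at h

lemma ae_zero {q : ℝ} (hq : 1 < q) {f : ℝ → ℝ} {μ : Measure ℝ}
    (h0 : weakNorm q f μ = 0) : f =ᵐ[μ] 0 := by
  have hterm : ∀ α : ℝ, 0 < α → μ {t | α < |f t|} = 0 := by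
    intro α hα
    have h := le_iSup (fun a : {a : ℝ // 0 < a} =>
      ENNReal.ofReal a.1 * (μ {t | a.1 < |f t|}) ^ (1 / q)) ⟨α, hα⟩
    rw [← weakNorm, h0, le_zero_iff, mul_eq_zero] at h
    rcases h with h | h
    · exact absurd h (by simp [ENNReal.ofReal_eq_zero, not_le, hα])
    · rcases (ENNReal.rpow_eq_zero_iff.1 h) with ⟨h1, _⟩ | ⟨_, h2⟩
      · exact h1
      · exact absurd h2 (not_lt.2 (by positivity))
  have hnull : μ {t | f t ≠ 0} = 0 := by
    have hsub : {t | f t ≠ 0} ⊆ ⋃ n : ℕ, {t | 1 / (n + 1 : ℝ) < |f t|} := by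
      intro t ht
      obtain ⟨n, hn⟩ := exists_nat_one_div_lt (abs_pos.2 ht)
      exact Set.mem_iUnion.2 ⟨n, hn⟩
    refine le_antisymm (le_trans (measure_mono hsub) ?_) zero_le
    refine le_trans (measure_iUnion_le _) ?_
    have : ∀ n : ℕ, μ {t | ((n:ℝ) + 1)⁻¹ < |f t|} = 0 := fun n =>
      hterm _ (by positivity)
    simp [this]
  exact hnull

/-- Key estimate -/
lemma key {q : ℝ} (hq : 1 < q) {f : ℝ → ℝ}
    (hm : AEStronglyMeasurable f (volume.restrict (Set.Ioo (0:ℝ) 1)))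
    (hW : weakNorm q f (volume.restrict (Set.Ioo (0:ℝ) 1)) < ⊤)
    {a : ℝ} (ha : 0 < a) (ha1 : a ≤ 1) :
    ∫⁻ t in Set.Ioo 0 a, ENNReal.ofReal |f t| ≤
      ENNReal.ofReal ((weakNorm q f (volume.restrict (Set.Ioo (0:ℝ) 1))).toReal *
        a ^ (1 - 1/q) * (q/(q-1))) := by
  set μ₁ := volume.restrict (Set.Ioo (0:ℝ) 1) with hμ₁
  set W := weakNorm q f μ₁ with hWdef
  set M := W.toReal with hMdef
  have hq0 : (0:ℝ) < q := by linarith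
  have hq1 : (0:ℝ) < q - 1 := by linarith
  have hsub : Set.Ioo (0:ℝ) a ⊆ Set.Ioo (0:ℝ) 1 := Set.Ioo_subset_Ioo le_rfl ha1
  have hνμ : volume.restrict (Set.Ioo (0:ℝ) a) ≤ μ₁ :=
    Measure.restrict_mono hsub le_rfl
  have hmν : AEMeasurable (fun t => |f t|) (volume.restrict (Set.Ioo (0:ℝ) a)) := by
    have := (hm.mono_measure hνμ).norm.aemeasurable
    simpa [Real.norm_eq_abs] using this
  have hlayer := lintegral_eq_lintegral_meas_lt (volume.restrict (Set.Ioo (0:ℝ) a))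
    (Filter.Eventually.of_forall fun t => abs_nonneg (f t)) hmν
  rw [hlayer]
  have hM0 : 0 ≤ M := ENNReal.toReal_nonneg
  rcases eq_or_lt_of_le hM0 with hM | hM
  · -- M = 0 hence W = 0, f ae zero
    have hW0 : W = 0 := by
      rw [← ENNReal.ofReal_toReal hW.ne, ← hMdef, ← hM, ENNReal.ofReal_zero]
    have hf0 : f =ᵐ[μ₁] 0 := ae_zero hq hW0
    have hf0' : f =ᵐ[volume.restrict (Set.Ioo (0:ℝ) a)] 0 :=
      (Measure.absolutelyContinuous_of_le hνμ).ae_eq hf0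
    have hz : ∀ α ∈ Set.Ioi (0:ℝ),
        (volume.restrict (Set.Ioo (0:ℝ) a)) {t | α < |f t|} = 0 := by
      intro α hα
      have hne : (volume.restrict (Set.Ioo (0:ℝ) a)) {t | f t ≠ 0} = 0 := by
        have := ae_iff.1 hf0'
        simpa using this
      refine le_antisymm (le_trans (measure_mono ?_) hne.le) zero_le
      intro t ht
      simp only [Set.mem_setOf_eq] at ht ⊢
      intro h0
      rw [h0, abs_zero] at ht
      exact absurd ht (not_lt.2 (Set.mem_Ioi.1 hα).le)
    calc ∫⁻ α in Set.Ioi (0:ℝ), (volume.restrict (Set.Ioo (0:ℝ) a)) {t | α < |f t|}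
        = ∫⁻ _ in Set.Ioi (0:ℝ), 0 :=
          setLIntegral_congr_fun measurableSet_Ioi hz
      _ = 0 := lintegral_zero
      _ ≤ _ := zero_le
  · set α₀ : ℝ := M * a ^ (-(1/q)) with hα₀def
    have hα₀ : 0 < α₀ := by positivity
    have hsplit : Set.Ioi (0:ℝ) = Set.Ioc 0 α₀ ∪ Set.Ioi α₀ :=
      (Set.Ioc_union_Ioi_eq_Ioi hα₀.le).symm
    have hdisj : Disjoint (Set.Ioc (0:ℝ) α₀) (Set.Ioi α₀) := Set.Ioc_disjoint_Ioi le_rfl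
    rw [hsplit, lintegral_union measurableSet_Ioi hdisj]
    have hpart1 : ∫⁻ α in Set.Ioc 0 α₀, (volume.restrict (Set.Ioo (0:ℝ) a)) {t | α < |f t|}
        ≤ ENNReal.ofReal (a * α₀) := by
      calc ∫⁻ α in Set.Ioc 0 α₀, (volume.restrict (Set.Ioo (0:ℝ) a)) {t | α < |f t|}
          ≤ ∫⁻ _ in Set.Ioc 0 α₀, ENNReal.ofReal a := by
            refine lintegral_mono fun α => ?_
            calc (volume.restrict (Set.Ioo (0:ℝ) a)) {t | α < |f t|}
                ≤ (volume.restrict (Set.Ioo (0:ℝ) a)) Set.univ := measure_mono (Set.subset_univ _)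
              _ = ENNReal.ofReal a := by
                  rw [Measure.restrict_apply_univ, Real.volume_Ioo, sub_zero]
        _ = ENNReal.ofReal a * ENNReal.ofReal α₀ := by
            rw [setLIntegral_const, Real.volume_Ioc, sub_zero]
        _ = ENNReal.ofReal (a * α₀) := (ENNReal.ofReal_mul ha.le).symm
    have hpart2 : ∫⁻ α in Set.Ioi α₀, (volume.restrict (Set.Ioo (0:ℝ) a)) {t | α < |f t|}
        ≤ ENNReal.ofReal (M ^ q * (α₀ ^ (1 - q) / (q - 1))) := by
      have hWM : W = ENNReal.ofReal M := (ENNReal.ofReal_toReal hW.ne).symm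
      have hptwise : ∀ α ∈ Set.Ioi α₀,
          (volume.restrict (Set.Ioo (0:ℝ) a)) {t | α < |f t|} ≤ ENNReal.ofReal ((M/α)^q) := by
        intro α hα
        have hαpos : 0 < α := lt_trans hα₀ hα
        calc (volume.restrict (Set.Ioo (0:ℝ) a)) {t | α < |f t|}
            ≤ μ₁ {t | α < |f t|} := hνμ _
          _ ≤ (W / ENNReal.ofReal α) ^ q := dist_bound hq hαpos
          _ = ENNReal.ofReal ((M/α)^q) := by
              rw [hWM, ← ENNReal.ofReal_div_of_pos hαpos,
                ← ENNReal.ofReal_rpow_of_nonneg (div_nonneg hM0 hαpos.le) hq0.le]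
      calc ∫⁻ α in Set.Ioi α₀, (volume.restrict (Set.Ioo (0:ℝ) a)) {t | α < |f t|}
          ≤ ∫⁻ α in Set.Ioi α₀, ENNReal.ofReal ((M/α)^q) := by
            refine setLIntegral_mono' measurableSet_Ioi hptwise
        _ = ENNReal.ofReal (∫ α in Set.Ioi α₀, (M/α)^q) := by
            rw [← ofReal_integral_eq_lintegral_ofReal]
            · -- integrability
              have : (fun α : ℝ => (M/α)^q) =ᵐ[volume.restrict (Set.Ioi α₀)]
                  fun α => M^q * α^(-q) := by
                filter_upwards [ae_restrict_mem measurableSet_Ioi] with α hα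
                have : 0 < α := lt_trans hα₀ hα
                rw [Real.div_rpow hM0 this.le, Real.rpow_neg this.le, div_eq_mul_inv]
              refine (Integrable.congr ?_ this.symm)
              exact (integrableOn_Ioi_rpow_of_lt (by linarith : -q < -1) hα₀).const_mul _
            · filter_upwards [ae_restrict_mem measurableSet_Ioi] with α hα
              exact Real.rpow_nonneg (div_nonneg hM0 (le_of_lt (lt_trans hα₀ hα))) _
        _ ≤ ENNReal.ofReal (M ^ q * (α₀ ^ (1 - q) / (q - 1))) := by
            apply ENNReal.ofReal_le_ofReal
            have hcongr : ∫ α in Set.Ioi α₀, (M/α)^q = M^q * ∫ α in Set.Ioi α₀, α^(-q) := by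
              rw [← integral_const_mul]
              refine setIntegral_congr_fun measurableSet_Ioi fun α hα => ?_
              have : 0 < α := lt_trans hα₀ hα
              rw [Real.div_rpow hM0 this.le, Real.rpow_neg this.le, div_eq_mul_inv]
            rw [hcongr, integral_Ioi_rpow_of_lt (by linarith : -q < -1) hα₀]
            apply le_of_eq
            congr 1
            have he : -q + 1 = 1 - q := by ring
            rw [he, neg_div, ← div_neg, neg_sub]
    refine le_trans (add_le_add hpart1 hpart2) ?_
    rw [← ENNReal.ofReal_add (mul_nonneg ha.le hα₀.le)
      (mul_nonneg (Real.rpow_nonneg hM0 _)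
        (div_nonneg (Real.rpow_nonneg hα₀.le _) hq1.le))]
    apply ENNReal.ofReal_le_ofReal
    apply le_of_eq
    have ha' : a ^ (1:ℝ) * a ^ (-(1/q)) = a ^ (1 - 1/q) := by
      rw [← Real.rpow_add ha]
      congr 1 <;> ring
    have h1 : a * α₀ = M * a ^ (1 - 1/q) := by
      rw [hα₀def, ← ha', Real.rpow_one]; ring
    have h2 : α₀ ^ (1-q) = M ^ (1-q) * a ^ (1 - 1/q) := by
      rw [hα₀def, Real.mul_rpow hM0 (Real.rpow_nonneg ha.le _), ← Real.rpow_mul ha.le]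
      congr 1 <;> congr 1 <;> field_simp <;> ring
    have h3 : M ^ q * M ^ (1-q) = M := by
      rw [← Real.rpow_add hM]; norm_num
    have e : M ^ q * (M ^ (1-q) * a ^ (1 - 1/q) / (q-1)) = M * a ^ (1 - 1/q) / (q-1) := by
      rw [mul_div_assoc', ← mul_assoc, h3]
    rw [h1, h2, e]
    field_simp
    ring


lemma integrableOn_and_bound {q : ℝ} (hq : 1 < q) {f : ℝ → ℝ}
    (hm : AEStronglyMeasurable f (volume.restrict (Set.Ioo (0:ℝ) 1)))
    (hW : weakNorm q f (volume.restrict (Set.Ioo (0:ℝ) 1)) < ⊤)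
    {a : ℝ} (ha : 0 < a) (ha1 : a ≤ 1) :
    IntegrableOn f (Set.Ioo (0:ℝ) a) volume ∧
      |∫ t in Set.Ioo (0:ℝ) a, f t| ≤
        (weakNorm q f (volume.restrict (Set.Ioo (0:ℝ) 1))).toReal *
          a ^ (1 - 1/q) * (q/(q-1)) := by
  have hsub : Set.Ioo (0:ℝ) a ⊆ Set.Ioo (0:ℝ) 1 := Set.Ioo_subset_Ioo le_rfl ha1
  have hνμ : volume.restrict (Set.Ioo (0:ℝ) a) ≤ volume.restrict (Set.Ioo (0:ℝ) 1) :=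
    Measure.restrict_mono hsub le_rfl
  have hmν : AEStronglyMeasurable f (volume.restrict (Set.Ioo (0:ℝ) a)) :=
    hm.mono_measure hνμ
  have hkey := key hq hm hW ha ha1
  have hnn : (0:ℝ) ≤ (weakNorm q f (volume.restrict (Set.Ioo (0:ℝ) 1))).toReal *
      a ^ (1 - 1/q) * (q/(q-1)) := by
    have := ENNReal.toReal_nonneg (a := weakNorm q f (volume.restrict (Set.Ioo (0:ℝ) 1)))
    have h1 : (0:ℝ) ≤ a ^ (1 - 1/q) := Real.rpow_nonneg ha.le _
    have h2 : (0:ℝ) ≤ q/(q-1) := div_nonneg (by linarith) (by linarith)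
    positivity
  have heq : ∀ t : ℝ, ENNReal.ofReal |f t| = (‖f t‖₊ : ℝ≥0∞) := by
    intro t
    rw [← Real.norm_eq_abs, ofReal_norm, enorm_eq_nnnorm]
  have hint : IntegrableOn f (Set.Ioo (0:ℝ) a) volume := by
    refine ⟨hmν, ?_⟩
    rw [hasFiniteIntegral_iff_norm]
    calc ∫⁻ t in Set.Ioo (0:ℝ) a, ENNReal.ofReal ‖f t‖
        = ∫⁻ t in Set.Ioo (0:ℝ) a, ENNReal.ofReal |f t| := by
          simp [Real.norm_eq_abs]
      _ ≤ _ := hkey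
      _ < ⊤ := ENNReal.ofReal_lt_top
  refine ⟨hint, ?_⟩
  calc |∫ t in Set.Ioo (0:ℝ) a, f t|
      ≤ ∫ t in Set.Ioo (0:ℝ) a, |f t| := by
        simpa [Real.norm_eq_abs] using
          norm_integral_le_integral_norm (μ := volume.restrict (Set.Ioo (0:ℝ) a)) f
    _ = (∫⁻ t in Set.Ioo (0:ℝ) a, ENNReal.ofReal |f t|).toReal := by
        rw [integral_eq_lintegral_of_nonneg_ae
          (Filter.Eventually.of_forall fun t => abs_nonneg (f t))
          (hmν.norm.congr (by simp [Real.norm_eq_abs]))]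
    _ ≤ _ := by
        have := ENNReal.toReal_mono ENNReal.ofReal_ne_top hkey
        rwa [ENNReal.toReal_ofReal hnn] at this

noncomputable def seq (q : ℝ) (f : ℝ → ℝ) (n : ℕ) : ℝ :=
  (2:ℝ) ^ ((n:ℝ) * (1 - 1/q)) * ∫ t in Set.Ioo (0:ℝ) ((2:ℝ) ^ (-(n:ℝ))), f t

lemma two_rpow_pos (n : ℕ) : 0 < (2:ℝ) ^ (-(n:ℝ)) := Real.rpow_pos_of_pos two_pos _

lemma two_rpow_le_one (n : ℕ) : (2:ℝ) ^ (-(n:ℝ)) ≤ 1 :=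
  Real.rpow_le_one_of_one_le_of_nonpos one_le_two (neg_nonpos_of_nonneg (Nat.cast_nonneg n))

lemma seq_abs_le {q : ℝ} (hq : 1 < q) {f : ℝ → ℝ}
    (hm : AEStronglyMeasurable f (volume.restrict (Set.Ioo (0:ℝ) 1)))
    (hW : weakNorm q f (volume.restrict (Set.Ioo (0:ℝ) 1)) < ⊤) (n : ℕ) :
    |UFW.seq q f n| ≤ (weakNorm q f (volume.restrict (Set.Ioo (0:ℝ) 1))).toReal * (q/(q-1)) := by
  obtain ⟨-, hb⟩ := integrableOn_and_bound hq hm hW (two_rpow_pos n) (two_rpow_le_one n)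
  set M := (weakNorm q f (volume.restrict (Set.Ioo (0:ℝ) 1))).toReal with hM
  have hp : (0:ℝ) < (2:ℝ) ^ ((n:ℝ)*(1-1/q)) := Real.rpow_pos_of_pos two_pos _
  have key2 : (2:ℝ)^((n:ℝ)*(1-1/q)) * ((2:ℝ)^(-(n:ℝ)))^(1-1/q) = 1 := by
    rw [← Real.rpow_mul (by norm_num : (0:ℝ) ≤ 2), ← Real.rpow_add two_pos,
      show (n:ℝ)*(1-1/q) + (-(n:ℝ))*(1-1/q) = 0 by ring, Real.rpow_zero]
  calc |UFW.seq q f n| = (2:ℝ)^((n:ℝ)*(1-1/q)) * |∫ t in Set.Ioo (0:ℝ) ((2:ℝ)^(-(n:ℝ))), f t| := by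
        rw [seq, abs_mul, abs_of_pos hp]
    _ ≤ (2:ℝ)^((n:ℝ)*(1-1/q)) * (M * ((2:ℝ)^(-(n:ℝ)))^(1-1/q) * (q/(q-1))) :=
        mul_le_mul_of_nonneg_left hb hp.le
    _ = ((2:ℝ)^((n:ℝ)*(1-1/q)) * ((2:ℝ)^(-(n:ℝ)))^(1-1/q)) * (M * (q/(q-1))) := by ring
    _ = M * (q/(q-1)) := by rw [key2, one_mul]

lemma exists_lim {q : ℝ} (hq : 1 < q) (𝒰 : Ultrafilter ℕ) {f : ℝ → ℝ}
    (hm : AEStronglyMeasurable f (volume.restrict (Set.Ioo (0:ℝ) 1)))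
    (hW : weakNorm q f (volume.restrict (Set.Ioo (0:ℝ) 1)) < ⊤) :
    ∃ x : ℝ, |x| ≤ (weakNorm q f (volume.restrict (Set.Ioo (0:ℝ) 1))).toReal * (q/(q-1)) ∧
      Filter.Tendsto (UFW.seq q f) (𝒰 : Filter ℕ) (nhds x) := by
  set C := (weakNorm q f (volume.restrict (Set.Ioo (0:ℝ) 1))).toReal * (q/(q-1)) with hC
  have hmem : ∀ n, UFW.seq q f n ∈ Set.Icc (-C) C := fun n => by
    have := abs_le.1 (seq_abs_le hq hm hW n)
    exact ⟨this.1, this.2⟩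
  have hle : (Ultrafilter.map (UFW.seq q f) 𝒰 : Filter ℝ) ≤ Filter.principal (Set.Icc (-C) C) := by
    rw [Filter.le_principal_iff]
    exact Filter.mem_map.2 (Filter.mem_of_superset Filter.univ_mem (fun n _ => hmem n))
  obtain ⟨x, hx, hconv⟩ := isCompact_Icc.ultrafilter_le_nhds (Ultrafilter.map (UFW.seq q f) 𝒰) hle
  exact ⟨x, abs_le.2 ⟨hx.1, hx.2⟩, hconv⟩

lemma weakNorm_add_lt_top {q : ℝ} (hq : 1 < q) {f g : ℝ → ℝ} {μ : Measure ℝ}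
    (hf : weakNorm q f μ < ⊤) (hg : weakNorm q g μ < ⊤) :
    weakNorm q (f + g) μ < ⊤ := by
  have hq0 : (0:ℝ) < q := by linarith
  refine lt_of_le_of_lt (iSup_le fun a => ?_)
    (show ENNReal.ofReal 2 * (weakNorm q f μ + weakNorm q g μ) < ⊤ from
      ENNReal.mul_lt_top ENNReal.ofReal_lt_top (ENNReal.add_lt_top.2 ⟨hf, hg⟩))
  obtain ⟨α, hα⟩ := a
  have hα2 : 0 < α/2 := by linarith
  have hofα : ENNReal.ofReal α = ENNReal.ofReal 2 * ENNReal.ofReal (α/2) := by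
    rw [← ENNReal.ofReal_mul (by norm_num : (0:ℝ) ≤ 2)]
    congr 1
    ring
  have hsub : {t | α < |(f+g) t|} ⊆ {t | α/2 < |f t|} ∪ {t | α/2 < |g t|} := by
    intro t ht
    simp only [Set.mem_setOf_eq, Pi.add_apply] at ht
    by_contra hcon
    simp only [Set.mem_union, Set.mem_setOf_eq, not_or, not_lt] at hcon
    have h1 := abs_add_le (f t) (g t)
    have h2 : |f t + g t| ≤ α := by linarith [hcon.1, hcon.2]
    linarith
  calc ENNReal.ofReal α * (μ {t | α < |(f+g) t|}) ^ (1/q)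
      ≤ ENNReal.ofReal α * ((μ {t | α/2 < |f t|}) ^ (1/q) + (μ {t | α/2 < |g t|}) ^ (1/q)) := by
        refine mul_le_mul_right ?_ _
        refine le_trans (ENNReal.rpow_le_rpow (le_trans (measure_mono hsub)
          (measure_union_le _ _)) (by positivity)) ?_
        exact ENNReal.rpow_add_le_add_rpow _ _ (by positivity) (by
          rw [div_le_one hq0]; linarith)
    _ ≤ ENNReal.ofReal α * (weakNorm q f μ / ENNReal.ofReal (α/2) +
          weakNorm q g μ / ENNReal.ofReal (α/2)) :=
        mul_le_mul_right (add_le_add (dist_bound' hα2) (dist_bound' hα2)) _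
    _ = ENNReal.ofReal 2 * (ENNReal.ofReal (α/2) * (weakNorm q f μ / ENNReal.ofReal (α/2)) +
          ENNReal.ofReal (α/2) * (weakNorm q g μ / ENNReal.ofReal (α/2))) := by
        rw [hofα]; ring
    _ ≤ ENNReal.ofReal 2 * (weakNorm q f μ + weakNorm q g μ) :=
        mul_le_mul_right (add_le_add ENNReal.mul_div_le ENNReal.mul_div_le) _

lemma weakNorm_smul_lt_top {q : ℝ} (hq : 1 < q) (c : ℝ) {f : ℝ → ℝ} {μ : Measure ℝ}
    (hf : weakNorm q f μ < ⊤) :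
    weakNorm q (fun t => c * f t) μ < ⊤ := by
  have hq0 : (0:ℝ) < q := by linarith
  rcases eq_or_ne c 0 with rfl | hc
  · refine lt_of_le_of_lt (iSup_le fun a => ?_) (by norm_num : (0:ℝ≥0∞) < ⊤)
    have he : {t : ℝ | a.1 < |0 * f t|} = ∅ := by
      ext t
      simp only [Set.mem_setOf_eq, zero_mul, abs_zero, Set.mem_empty_iff_false, iff_false,
        not_lt]
      exact a.2.le
    rw [he, measure_empty, ENNReal.zero_rpow_of_pos (by positivity), mul_zero]
  · have hcpos : 0 < |c| := abs_pos.2 hc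
    refine lt_of_le_of_lt (iSup_le fun a => ?_)
      (show ENNReal.ofReal (|c|) * weakNorm q f μ < ⊤ from
        ENNReal.mul_lt_top ENNReal.ofReal_lt_top hf)
    obtain ⟨α, hα⟩ := a
    have hαc : 0 < α/|c| := by positivity
    have he : {t : ℝ | α < |c * f t|} = {t : ℝ | α/|c| < |f t|} := by
      ext t
      simp only [Set.mem_setOf_eq, abs_mul]
      rw [div_lt_iff₀ hcpos]
      constructor <;> intro h <;> linarith [mul_comm (|c|) (|f t|)]
    have hofα : ENNReal.ofReal α = ENNReal.ofReal (|c|) * ENNReal.ofReal (α/|c|) := by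
      rw [← ENNReal.ofReal_mul hcpos.le]
      rw [mul_div_cancel₀ _ (ne_of_gt hcpos)]
    calc ENNReal.ofReal α * (μ {t | α < |c * f t|}) ^ (1/q)
        ≤ ENNReal.ofReal α * (weakNorm q f μ / ENNReal.ofReal (α/|c|)) := by
          rw [he]
          exact mul_le_mul_right (dist_bound' hαc) _
      _ = ENNReal.ofReal (|c|) * (ENNReal.ofReal (α/|c|) *
            (weakNorm q f μ / ENNReal.ofReal (α/|c|))) := by rw [hofα, mul_assoc]
      _ ≤ ENNReal.ofReal (|c|) * weakNorm q f μ := mul_le_mul_right ENNReal.mul_div_le _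

end UFW

open UFW

/-- **An ultrafilter-limit functional on weak `L_q(0,1)`.**
Let `1 < q < ∞` and let `𝒰` be a free ultrafilter on `ℕ`.  Then
`ψ(f) := lim_𝒰 [2^{n(1−1/q)} ∫₀^{2^{−n}} f(t) dt]` defines a bounded linear
functional on `L_{q,∞}(0,1)` with `|ψ(f)| ≤ ‖f‖_{L_{q,∞}} · q/(q−1)`. -/
theorem ultrafilter_functional_weakLq (q : ℝ) (hq : 1 < q)
    (𝒰 : Ultrafilter ℕ) (hfree : (𝒰 : Filter ℕ) ≤ Filter.atTop) :
    ∃ ψ : (ℝ → ℝ) → ℝ,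
      (∀ f : ℝ → ℝ,
          AEStronglyMeasurable f (volume.restrict (Set.Ioo (0 : ℝ) 1)) →
          weakNorm q f (volume.restrict (Set.Ioo (0 : ℝ) 1)) < ⊤ →
          Filter.Tendsto
            (fun n : ℕ => (2 : ℝ) ^ ((n : ℝ) * (1 - 1 / q)) *
              ∫ t in Set.Ioo (0 : ℝ) ((2 : ℝ) ^ (-(n : ℝ))), f t)
            (𝒰 : Filter ℕ) (nhds (ψ f))) ∧
      (∀ f g : ℝ → ℝ,
          AEStronglyMeasurable f (volume.restrict (Set.Ioo (0 : ℝ) 1)) →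
          AEStronglyMeasurable g (volume.restrict (Set.Ioo (0 : ℝ) 1)) →
          weakNorm q f (volume.restrict (Set.Ioo (0 : ℝ) 1)) < ⊤ →
          weakNorm q g (volume.restrict (Set.Ioo (0 : ℝ) 1)) < ⊤ →
          ψ (f + g) = ψ f + ψ g) ∧
      (∀ (c : ℝ) (f : ℝ → ℝ),
          AEStronglyMeasurable f (volume.restrict (Set.Ioo (0 : ℝ) 1)) →
          weakNorm q f (volume.restrict (Set.Ioo (0 : ℝ) 1)) < ⊤ →
          ψ (fun t => c * f t) = c * ψ f) ∧
      (∀ f : ℝ → ℝ,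
          AEStronglyMeasurable f (volume.restrict (Set.Ioo (0 : ℝ) 1)) →
          weakNorm q f (volume.restrict (Set.Ioo (0 : ℝ) 1)) < ⊤ →
          |ψ f| ≤
            (weakNorm q f (volume.restrict (Set.Ioo (0 : ℝ) 1))).toReal *
              (q / (q - 1))) := by
  classical
  set μ₁ := volume.restrict (Set.Ioo (0:ℝ) 1) with hμ₁
  set Ok : (ℝ → ℝ) → Prop := fun f =>
    AEStronglyMeasurable f μ₁ ∧ weakNorm q f μ₁ < ⊤ with hOk
  set ψ : (ℝ → ℝ) → ℝ := fun f =>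
    if h : Ok f then (exists_lim hq 𝒰 h.1 h.2).choose else 0 with hψ
  have hψ_tendsto : ∀ f : ℝ → ℝ, AEStronglyMeasurable f μ₁ → weakNorm q f μ₁ < ⊤ →
      Filter.Tendsto (UFW.seq q f) (𝒰 : Filter ℕ) (nhds (ψ f)) := by
    intro f hm hW
    have h : Ok f := ⟨hm, hW⟩
    rw [hψ]
    simp only [dif_pos h]
    exact (exists_lim hq 𝒰 h.1 h.2).choose_spec.2
  have hψ_bound : ∀ f : ℝ → ℝ, AEStronglyMeasurable f μ₁ → weakNorm q f μ₁ < ⊤ →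
      |ψ f| ≤ (weakNorm q f μ₁).toReal * (q / (q - 1)) := by
    intro f hm hW
    have h : Ok f := ⟨hm, hW⟩
    rw [hψ]
    simp only [dif_pos h]
    exact (exists_lim hq 𝒰 h.1 h.2).choose_spec.1
  refine ⟨ψ, fun f hm hW => hψ_tendsto f hm hW, ?_, ?_, fun f hm hW => hψ_bound f hm hW⟩
  · -- additivity
    intro f g hmf hmg hWf hWg
    have hWfg : weakNorm q (f + g) μ₁ < ⊤ := weakNorm_add_lt_top hq hWf hWg
    have hmfg : AEStronglyMeasurable (f + g) μ₁ := hmf.add hmg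
    have hsum : ∀ n, UFW.seq q (f + g) n = UFW.seq q f n + UFW.seq q g n := by
      intro n
      unfold UFW.seq
      rw [← mul_add]
      congr 1
      have h1 := (integrableOn_and_bound hq hmf hWf (two_rpow_pos n) (two_rpow_le_one n)).1
      have h2 := (integrableOn_and_bound hq hmg hWg (two_rpow_pos n) (two_rpow_le_one n)).1
      rw [← integral_add h1 h2]
      rfl
    have ht1 : Filter.Tendsto (UFW.seq q (f + g)) (𝒰 : Filter ℕ) (nhds (ψ f + ψ g)) := by
      refine Filter.Tendsto.congr (fun n => (hsum n).symm) ?_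
      exact (hψ_tendsto f hmf hWf).add (hψ_tendsto g hmg hWg)
    exact tendsto_nhds_unique (hψ_tendsto (f + g) hmfg hWfg) ht1
  · -- scalar
    intro c f hm hW
    have hWc : weakNorm q (fun t => c * f t) μ₁ < ⊤ := weakNorm_smul_lt_top hq c hW
    have hmc : AEStronglyMeasurable (fun t => c * f t) μ₁ := hm.const_mul c
    have hsc : ∀ n, UFW.seq q (fun t => c * f t) n = c * UFW.seq q f n := by
      intro n
      unfold UFW.seq
      rw [integral_const_mul]
      ring
    have ht1 : Filter.Tendsto (UFW.seq q (fun t => c * f t)) (𝒰 : Filter ℕ)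
        (nhds (c * ψ f)) := by
      refine Filter.Tendsto.congr (fun n => (hsc n).symm) ?_
      exact (hψ_tendsto f hm hW).const_mul c
    exact tendsto_nhds_unique (hψ_tendsto (fun t => c * f t) hmc hWc) ht1
end

section
/- Define the Orlicz function M̃ piecewise by M̃(t) = (2/n!)t − 1/(n!)² for (n+2)/(2(n+1)!) ≤ t < (n+1)/(2 n!), n ≥ 1, and M̃(t) = t² for t ≥ 1, and let N(t) = t². Then the generalized Young conjugate (N ⊖ M̃)(t) := sup_{0≤s≤1}[N(st) − M̃(s)] satisfies (N ⊖ M̃)(t) = max_{n∈ℕ} ((n+1)²t² − 4n)/(4(n!)²) for t > 0. -/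
private lemma fac_bound (k : ℕ) : k * (k + 1) ≤ 4 * k.factorial := by
  induction k with
  | zero => simp
  | succ n ih =>
    rw [Nat.factorial_succ]
    have h1 := n.self_le_factorial
    have h2 := n.factorial_pos
    nlinarith

/-- **Computation of a generalized Young conjugate.**
Define the Orlicz function `M̃` piecewise by
`M̃(t) = (2/n!)·t − 1/(n!)²` for `(n+2)/(2(n+1)!) ≤ t < (n+1)/(2·n!)`, `n ≥ 1`,
`M̃(t) = t²` for `t ≥ 1` (and `M̃(0) = 0`), and let `N(t) = t²`.  Then the
generalized Young conjugate `(N ⊖ M̃)(t) = sup_{0 ≤ s ≤ 1} [N(st) − M̃(s)]`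
satisfies `(N ⊖ M̃)(t) = max_{n ≥ 1} ((n+1)²t² − 4n)/(4(n!)²)` for all `t > 0`. -/
theorem generalized_young_conjugate_formula (Mt : ℝ → ℝ)
    (hMt0 : Mt 0 = 0)
    (hpiece : ∀ n : ℕ, 1 ≤ n → ∀ t : ℝ,
      ((n : ℝ) + 2) / (2 * (Nat.factorial (n + 1) : ℝ)) ≤ t →
      t < ((n : ℝ) + 1) / (2 * (Nat.factorial n : ℝ)) →
      Mt t = (2 / (Nat.factorial n : ℝ)) * t - 1 / ((Nat.factorial n : ℝ)) ^ 2)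
    (hsq : ∀ t : ℝ, 1 ≤ t → Mt t = t ^ 2) :
    ∀ t : ℝ, 0 < t →
      (⨆ s : Set.Icc (0 : ℝ) 1, (((s : ℝ) * t) ^ 2 - Mt s)) =
        ⨆ n : {m : ℕ // 1 ≤ m},
          (((n.1 : ℝ) + 1) ^ 2 * t ^ 2 - 4 * (n.1 : ℝ)) /
            (4 * ((Nat.factorial n.1 : ℝ)) ^ 2) := by
  classical
  intro t ht
  set A : ℕ → ℝ := fun n => ((n : ℝ) + 1) / (2 * (Nat.factorial n : ℝ)) with hA
  set G : {m : ℕ // 1 ≤ m} → ℝ := fun n =>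
    (((n.1 : ℝ) + 1) ^ 2 * t ^ 2 - 4 * (n.1 : ℝ)) /
      (4 * ((Nat.factorial n.1 : ℝ)) ^ 2) with hG
  clear_value A G
  have fpos : ∀ n : ℕ, (0 : ℝ) < (Nat.factorial n : ℝ) := fun n => by
    exact_mod_cast n.factorial_pos
  have fsucc : ∀ n : ℕ, ((Nat.factorial (n + 1) : ℕ) : ℝ)
      = ((n : ℝ) + 1) * (Nat.factorial n : ℝ) := by
    intro n; rw [Nat.factorial_succ]; push_cast; ring
  have hApos : ∀ n, 0 < A n := by
    intro n
    rw [hA]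
    have := fpos n
    positivity
  have hA' : ∀ k : ℕ, A k = ((k:ℝ) + 1) / (2 * (Nat.factorial k : ℝ)) := fun k => by rw [hA]
  have h2fac : ∀ n : ℕ, 1 ≤ n → ((n : ℝ) + 1) ≤ 2 * (Nat.factorial n : ℝ) := by
    intro n hn
    have h1 := n.self_le_factorial
    have : n + 1 ≤ 2 * n.factorial := by
      have := n.factorial_pos; omega
    exact_mod_cast this
  have hA_le1 : ∀ n, 1 ≤ n → A n ≤ 1 := by
    intro n hn
    rw [hA]
    rw [div_le_one (by positivity)]
    simpa using h2fac n hn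
  have hA_dec : ∀ n, 1 ≤ n → A (n + 1) < A n := by
    intro n hn
    simp only [hA]
    rw [div_lt_div_iff₀ (by positivity) (by positivity), fsucc]
    have hn' : (1 : ℝ) ≤ n := by exact_mod_cast hn
    have := fpos n
    push_cast
    have key : ((n:ℝ) + 2) < ((n:ℝ) + 1)^2 := by nlinarith
    nlinarith [mul_lt_mul_of_pos_right key (by positivity : (0:ℝ) < 2 * (Nat.factorial n : ℝ))]
  -- M̃ at left endpoints
  have hMA : ∀ m : ℕ, 1 ≤ m →
      Mt (A (m + 1)) = 2 / (Nat.factorial m : ℝ) * A (m + 1)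
        - 1 / (Nat.factorial m : ℝ) ^ 2 := by
    intro m hm
    refine hpiece m hm _ ?_ (by rw [← hA' m]; exact hA_dec m hm)
    simp only [hA]
    push_cast
    exact le_of_eq (by ring)
  -- G at index n as a quadratic value at A n
  have hGR : ∀ n : ℕ, ∀ hn : 1 ≤ n, G ⟨n, hn⟩
      = (A n * t) ^ 2 - (2 / (Nat.factorial n : ℝ) * A n
          - 1 / (Nat.factorial n : ℝ) ^ 2) := by
    intro n hn
    simp only [hG, hA]
    have := fpos n
    field_simp
    ring
  -- G at index m+1 as quadratic (with slope of piece m) at A (m+1)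
  have hGL : ∀ m : ℕ, ∀ hm : 1 ≤ m, G ⟨m + 1, by omega⟩
      = (A (m + 1) * t) ^ 2 - (2 / (Nat.factorial m : ℝ) * A (m + 1)
          - 1 / (Nat.factorial m : ℝ) ^ 2) := by
    intro m hm
    simp only [hG, hA, fsucc]
    have := fpos m
    have hm1 : (0:ℝ) < (m:ℝ) + 1 := by positivity
    push_cast
    field_simp
    ring
  -- boundedness of G
  have hG_bd : ∀ n : {m : ℕ // 1 ≤ m}, G n ≤ t ^ 2 := by
    rintro ⟨n, hn⟩
    simp only [hG]
    rw [div_le_iff₀ (by positivity)]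
    have h2 := h2fac n hn
    have := fpos n
    have hn' : (1:ℝ) ≤ (n:ℝ) := by exact_mod_cast hn
    nlinarith [sq_nonneg t, sq_nonneg ((n:ℝ)+1), mul_le_mul h2 h2 (by positivity) (by positivity)]
  have hbddG : BddAbove (Set.range G) := ⟨t ^ 2, by rintro _ ⟨n, rfl⟩; exact hG_bd n⟩
  -- 0 ≤ sup G
  have hS0 : 0 ≤ iSup G := by
    obtain ⟨k, hk⟩ := exists_nat_gt (4 / t ^ 2)
    have hk1 : 1 ≤ k + 1 := by omega
    have h0 : (0:ℝ) ≤ G ⟨k + 1, hk1⟩ := by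
      simp only [hG]
      apply div_nonneg _ (by positivity)
      have ht2 : (0:ℝ) < t ^ 2 := by positivity
      have hk' : 4 / t ^ 2 < (k:ℝ) + 1 := by push_cast at hk ⊢; linarith
      have h4 : 4 < ((k:ℝ) + 1) * t ^ 2 := by
        rw [div_lt_iff₀ ht2] at hk'; linarith
      push_cast
      nlinarith [sq_nonneg ((k:ℝ)+1), mul_pos (by positivity : (0:ℝ) < (k:ℝ)+1) ht2]
    exact le_trans h0 (le_ciSup hbddG _)
  have hA1 : A 1 = 1 := by simp [hA, Nat.factorial]
  -- covering lemma
  have hcover : ∀ s : ℝ, 0 < s → s < 1 → ∃ n : ℕ, 1 ≤ n ∧ A (n + 1) ≤ s ∧ s < A n := by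
    intro s hs hs1
    have hex : ∃ m : ℕ, ¬ s < A (m + 1) := by
      obtain ⟨k, hk⟩ := exists_nat_gt (2 / s)
      refine ⟨k, not_lt.mpr ?_⟩
      have hk1 : (0:ℝ) < (k:ℝ) + 1 := by positivity
      have hfb : ((k+1 : ℕ) : ℝ) * (((k+1:ℕ):ℝ) + 1) ≤ 4 * ((Nat.factorial (k+1) : ℕ) : ℝ) := by
        exact_mod_cast fac_bound (k + 1)
      have hAk : A (k + 1) ≤ 2 / ((k:ℝ) + 1) := by
        simp only [hA]
        rw [div_le_div_iff₀ (by positivity) hk1]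
        push_cast at hfb ⊢
        nlinarith
      have : 2 / ((k:ℝ) + 1) ≤ s := by
        rw [div_le_iff₀ hk1]
        rw [div_lt_iff₀ hs] at hk
        nlinarith
      linarith
    set n := Nat.find hex with hn
    have hn1 : ¬ s < A (n + 1) := Nat.find_spec hex
    have hnpos : 1 ≤ n := by
      by_contra h
      have h0 : n = 0 := by omega
      rw [h0, hA1] at hn1
      exact hn1 hs1
    have hprev : s < A n := by
      have h1 : ¬ ¬ s < A ((n - 1) + 1) := Nat.find_min hex (by omega)
      rw [not_not, Nat.sub_add_cancel hnpos] at h1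
      exact h1
    exact ⟨n, hnpos, not_lt.mp hn1, hprev⟩
  -- pointwise bound on the left-hand supremand
  have hle : ∀ s : Set.Icc (0:ℝ) 1, ((s : ℝ) * t) ^ 2 - Mt s ≤ iSup G := by
    rintro ⟨s, hs0, hs1⟩
    simp only
    rcases eq_or_lt_of_le hs0 with h0 | h0
    · rw [← h0, hMt0]
      simpa using hS0
    rcases eq_or_lt_of_le hs1 with h1 | h1
    · rw [h1, hsq 1 le_rfl]
      have hg := le_ciSup hbddG ⟨1, le_rfl⟩
      rw [hGR 1 le_rfl, hA1] at hg
      norm_num [Nat.factorial] at hg ⊢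
      linarith
    · obtain ⟨n, hn, hls, hrs⟩ := hcover s h0 h1
      have hMs : Mt s = 2 / (Nat.factorial n : ℝ) * s - 1 / (Nat.factorial n : ℝ) ^ 2 := by
        apply hpiece n hn s _ (by rw [← hA' n]; exact hrs)
        simp only [hA] at hls
        push_cast at hls
        rw [show ((n:ℝ) + 2) = (n:ℝ) + 1 + 1 by ring]
        exact hls
      rw [hMs]
      have hf := fpos n
      by_cases hc : s * t ^ 2 ≤ 1 / (Nat.factorial n : ℝ)
      · refine le_trans ?_ (le_ciSup hbddG ⟨n + 1, by omega⟩)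
        rw [hGL n hn]
        have ha := hApos (n + 1)
        have h2 : (s + A (n + 1)) * t ^ 2 ≤ 2 / (Nat.factorial n : ℝ) := by
          have hst : (s + A (n + 1)) * t ^ 2 ≤ 2 * s * t ^ 2 :=
            mul_le_mul_of_nonneg_right (by linarith) (sq_nonneg t)
          have : 2 * s * t ^ 2 ≤ 2 / (Nat.factorial n : ℝ) := by
            rw [div_eq_mul_inv, two_mul]
            rw [div_eq_mul_inv, one_mul] at hc
            nlinarith
          linarith
        have hkey := mul_nonneg (sub_nonneg.2 hls) (sub_nonneg.2 h2)
        ring_nf at hkey ⊢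
        linarith [hkey]
      · refine le_trans ?_ (le_ciSup hbddG ⟨n, hn⟩)
        rw [hGR n hn]
        push_neg at hc
        have h2 : 2 / (Nat.factorial n : ℝ) ≤ (A n + s) * t ^ 2 := by
          have hst : 2 * s * t ^ 2 ≤ (A n + s) * t ^ 2 :=
            mul_le_mul_of_nonneg_right (by linarith [hrs]) (sq_nonneg t)
          have : 2 / (Nat.factorial n : ℝ) ≤ 2 * s * t ^ 2 := by
            rw [div_eq_mul_inv, two_mul]
            rw [div_eq_mul_inv, one_mul] at hc
            nlinarith
          linarith
        have hkey := mul_nonneg (sub_nonneg.2 hrs.le) (sub_nonneg.2 h2)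
        ring_nf at hkey ⊢
        linarith [hkey]
  have hbddF : BddAbove (Set.range fun s : Set.Icc (0:ℝ) 1 => ((s : ℝ) * t) ^ 2 - Mt s) :=
    ⟨iSup G, by rintro _ ⟨s, rfl⟩; exact hle s⟩
  apply le_antisymm
  · exact ciSup_le hle
  · apply ciSup_le
    rintro ⟨n, hn⟩
    rcases Nat.lt_or_ge n 2 with h | h
    · have hn1 : n = 1 := by omega
      subst hn1
      have h1 := le_ciSup hbddF ⟨(1:ℝ), by constructor <;> norm_num⟩
      simp only at h1
      rw [hsq 1 le_rfl] at h1
      rw [hGR 1 hn, hA1]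
      norm_num [Nat.factorial] at h1 ⊢
      linarith
    · obtain ⟨m, rfl⟩ : ∃ m, n = m + 1 := ⟨n - 1, by omega⟩
      have hm : 1 ≤ m := by omega
      have h1 := le_ciSup hbddF ⟨A (m + 1), ⟨(hApos _).le, hA_le1 _ (by omega)⟩⟩
      simp only at h1
      rw [hMA m hm] at h1
      rw [hGL m hm]
      exact h1
end

section
/- Let φ, ψ be positive increasing concave functions on (0,∞) with limsup_{n→∞} φ(n)/ψ(n) = ∞. Then the sequence {φ(n)/n}_{n≥1} does not belong to the Marcinkiewicz sequence space m_{t/ψ(t)}, i.e. sup_n [ (n/ψ(n)) · (1/n) Σ_{k=1}^n (φ(k)/k)* ] = ∞. -/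
open scoped BigOperators

/-- For a positive concave function on `(0,∞)`, `s * φ t ≤ t * φ s` when `0 < s ≤ t`. -/
lemma concave_slope_aux (φ : ℝ → ℝ) (hφpos : ∀ t : ℝ, 0 < t → 0 < φ t)
    (hφconc : ConcaveOn ℝ (Set.Ioi (0 : ℝ)) φ) {s t : ℝ} (hs : 0 < s) (hst : s ≤ t) :
    s * φ t ≤ t * φ s := by
  rcases eq_or_lt_of_le hst with rfl | hlt
  · exact le_of_eq rfl
  have ht : 0 < t := hs.trans hlt
  -- For each ε ∈ (0, s), convexity gives (s-ε) * φ t ≤ (t-ε) * φ s.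
  have key : ∀ ε ∈ Set.Ioo (0 : ℝ) s, (s - ε) * φ t ≤ (t - ε) * φ s := by
    intro ε hε
    obtain ⟨hε0, hεs⟩ := hε
    have hεt : ε < t := hεs.trans hlt
    set l : ℝ := (s - ε) / (t - ε) with hl
    have htε : (0:ℝ) < t - ε := by linarith
    have hl0 : 0 ≤ l := div_nonneg (by linarith) htε.le
    have hl1 : l ≤ 1 := by
      rw [hl, div_le_one htε]; linarith
    have hcomb : l * t + (1 - l) * ε = s := by
      have : l * (t - ε) = s - ε := by
        rw [hl]; field_simp
      nlinarith [this]
    have hconc := hφconc.2 (Set.mem_Ioi.2 ht) (Set.mem_Ioi.2 hε0) hl0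
      (by linarith : (0:ℝ) ≤ 1 - l) (by ring)
    simp only [smul_eq_mul] at hconc
    rw [hcomb] at hconc
    have hφε : 0 < φ ε := hφpos ε hε0
    have h1 : l * φ t ≤ φ s := by nlinarith
    have : (s - ε) * φ t ≤ (t - ε) * φ s := by
      have := mul_le_mul_of_nonneg_left h1 htε.le
      rw [mul_comm l (φ t)] at this
      calc (s - ε) * φ t = (t - ε) * (l * φ t) := by
            rw [hl]; field_simp
        _ ≤ (t - ε) * φ s := mul_le_mul_of_nonneg_left h1 htε.le
    exact this
  -- Take ε → 0⁺.
  have hne : (nhdsWithin (0:ℝ) (Set.Ioi 0)).NeBot := nhdsGT_neBot 0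
  have hev : (fun ε : ℝ => (s - ε) * φ t) ≤ᶠ[nhdsWithin (0:ℝ) (Set.Ioi 0)]
      (fun ε : ℝ => (t - ε) * φ s) := by
    have hmem : Set.Ioo (0:ℝ) s ∈ nhdsWithin (0:ℝ) (Set.Ioi 0) := by
      rw [show Set.Ioo (0:ℝ) s = Set.Ioi 0 ∩ Set.Iio s from rfl]
      exact Filter.inter_mem self_mem_nhdsWithin
        (nhdsWithin_le_nhds (Iio_mem_nhds hs))
    filter_upwards [hmem] with ε hε using key ε hε
  have h1 : Filter.Tendsto (fun ε : ℝ => (s - ε) * φ t) (nhdsWithin (0:ℝ) (Set.Ioi 0))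
      (nhds (s * φ t)) := by
    have : Filter.Tendsto (fun ε : ℝ => (s - ε) * φ t) (nhds (0:ℝ)) (nhds ((s - 0) * φ t)) := by
      exact ((continuous_const.sub continuous_id).mul continuous_const).tendsto 0
    simpa using this.mono_left nhdsWithin_le_nhds
  have h2 : Filter.Tendsto (fun ε : ℝ => (t - ε) * φ s) (nhdsWithin (0:ℝ) (Set.Ioi 0))
      (nhds (t * φ s)) := by
    have : Filter.Tendsto (fun ε : ℝ => (t - ε) * φ s) (nhds (0:ℝ)) (nhds ((t - 0) * φ s)) := by
      exact ((continuous_const.sub continuous_id).mul continuous_const).tendsto 0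
    simpa using this.mono_left nhdsWithin_le_nhds
  exact le_of_tendsto_of_tendsto h1 h2 hev

/-- **Non-membership in a Marcinkiewicz sequence space.**
Let `φ, ψ` be positive increasing concave functions on `(0,∞)` with
`limsup_{n→∞} φ(n)/ψ(n) = ∞`.  Then the sequence `{φ(n)/n}_{n ≥ 1}` does not
belong to the Marcinkiewicz sequence space `m_{t/ψ(t)}`, i.e.
`sup_n (n/ψ(n)) · (1/n) ∑_{k=1}^n φ(k)/k = ∞` (the sequence `{φ(n)/n}` is
nonincreasing, hence equal to its own decreasing rearrangement). -/
theorem not_mem_marcinkiewicz_of_limsup_top (φ ψ : ℝ → ℝ)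
    (hφpos : ∀ t : ℝ, 0 < t → 0 < φ t) (hψpos : ∀ t : ℝ, 0 < t → 0 < ψ t)
    (hφmono : MonotoneOn φ (Set.Ioi (0 : ℝ)))
    (hψmono : MonotoneOn ψ (Set.Ioi (0 : ℝ)))
    (hφconc : ConcaveOn ℝ (Set.Ioi (0 : ℝ)) φ)
    (hψconc : ConcaveOn ℝ (Set.Ioi (0 : ℝ)) ψ)
    (hlimsup : ∀ C : ℝ, ∃ᶠ n : ℕ in Filter.atTop, C < φ n / ψ n) :
    ∀ C : ℝ, ∃ n : ℕ, 1 ≤ n ∧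
      C < ((n : ℝ) / ψ n) * ((1 / (n : ℝ)) * ∑ k ∈ Finset.Icc 1 n, φ k / (k : ℝ)) := by
  intro C
  obtain ⟨n, hnC, hn1⟩ := ((hlimsup C).and_eventually (Filter.eventually_ge_atTop 1)).exists
  refine ⟨n, hn1, ?_⟩
  have hn0 : (0:ℝ) < n := by exact_mod_cast hn1
  have hψn : 0 < ψ n := hψpos n hn0
  -- Each term φ k / k ≥ φ n / n for k ∈ [1, n].
  have hterm : ∀ k ∈ Finset.Icc 1 n, φ n / n ≤ φ k / k := by
    intro k hk
    obtain ⟨hk1, hkn⟩ := Finset.mem_Icc.1 hk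
    have hk0 : (0:ℝ) < k := by exact_mod_cast hk1
    have hkn' : (k:ℝ) ≤ n := by exact_mod_cast hkn
    have := concave_slope_aux φ hφpos hφconc hk0 hkn'
    rw [div_le_div_iff₀ hn0 hk0]
    nlinarith
  have hsum : φ n ≤ ∑ k ∈ Finset.Icc 1 n, φ k / (k : ℝ) := by
    calc φ n = ∑ _k ∈ Finset.Icc 1 n, φ n / n := by
          rw [Finset.sum_const, Nat.card_Icc]
          simp only [Nat.add_sub_cancel, nsmul_eq_mul]
          field_simp
      _ ≤ ∑ k ∈ Finset.Icc 1 n, φ k / (k : ℝ) := Finset.sum_le_sum hterm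
  have heq : ((n : ℝ) / ψ n) * ((1 / (n : ℝ)) * ∑ k ∈ Finset.Icc 1 n, φ k / (k : ℝ))
      = (∑ k ∈ Finset.Icc 1 n, φ k / (k : ℝ)) / ψ n := by
    field_simp
  rw [heq]
  calc C < φ n / ψ n := hnC
    _ ≤ (∑ k ∈ Finset.Icc 1 n, φ k / (k : ℝ)) / ψ n := by gcongr
end
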